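/- arXiv:1608.03857 — 2 statements merged into one kernel-verified Lean document; each statement's English description precedes it below -/
import Mathlib

section
/- Let α : [0, e^{−γ}) → [0,∞) be defined by the equation α(η)·exp(−Ein(α(η))) = η (this is well-defined since w·e^{−Ein(w)} is strictly increasing from 0 to e^{−γ}). Then for all 0 ≤ w ≤ 0.2, w ≤ α(w) ≤ w + 2w². -/
/-! Put `a = α w`. Since the integrand of `Ein` lies in `[0, 1]`, `0 ≤ Ein a ≤ a`, whence
`a (1 - a) ≤ w ≤ a`. Since it is also at most `1/t`, `Ein b - Ein a ≤ log (b / a)`, so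
`a ↦ a e^{-Ein a}` is monotone; its value at `0.29` exceeds `0.2`, hence `a ≤ 0.29 < 1 - 1/√2`,
and for such `a` the bound `a (1 - a) ≤ w` gives `a ≤ w + 2 w²`. -/

open Real

noncomputable def Ein (w : ℝ) : ℝ := ∫ t in (0:ℝ)..w, (1 - Real.exp (-t)) / t

open MeasureTheory intervalIntegral Set

lemma one_sub_exp_neg_div_nonneg {t : ℝ} (ht : 0 ≤ t) : 0 ≤ (1 - exp (-t)) / t :=
  div_nonneg (sub_nonneg.mpr (exp_le_one_iff.mpr (neg_nonpos.mpr ht))) ht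

lemma one_sub_exp_neg_div_le_one {t : ℝ} (ht : 0 ≤ t) : (1 - exp (-t)) / t ≤ 1 := by
  rcases ht.eq_or_lt with rfl | ht
  · simp
  · rw [div_le_one ht]
    linarith [add_one_le_exp (-t)]

lemma one_sub_exp_neg_div_le_inv {t : ℝ} (ht : 0 < t) : (1 - exp (-t)) / t ≤ t⁻¹ := by
  rw [div_eq_mul_inv]
  exact mul_le_of_le_one_left (inv_nonneg.mpr ht.le) (by linarith [exp_pos (-t)])

lemma intervalIntegrable_one_sub_exp_neg_div {a b : ℝ} (ha : 0 ≤ a) (hab : a ≤ b) :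
    IntervalIntegrable (fun t => (1 - exp (-t)) / t) volume a b := by
  refine (intervalIntegrable_const (c := (1 : ℝ))).mono_fun' ?_ ?_
  · exact (by fun_prop : Measurable fun t : ℝ => (1 - exp (-t)) / t).aestronglyMeasurable
  · rw [uIoc_of_le hab]
    filter_upwards [ae_restrict_mem measurableSet_Ioc] with t ht
    have ht0 : 0 ≤ t := ha.trans ht.1.le
    rw [norm_of_nonneg (one_sub_exp_neg_div_nonneg ht0)]
    exact one_sub_exp_neg_div_le_one ht0

lemma Ein_nonneg {a : ℝ} (ha : 0 ≤ a) : 0 ≤ Ein a :=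
  integral_nonneg ha fun _ ht => one_sub_exp_neg_div_nonneg ht.1

lemma Ein_le_self {a : ℝ} (ha : 0 ≤ a) : Ein a ≤ a := by
  simpa [Ein] using integral_mono_on ha (intervalIntegrable_one_sub_exp_neg_div le_rfl ha)
    intervalIntegrable_const fun _ ht => one_sub_exp_neg_div_le_one ht.1

lemma Ein_sub_Ein_le_log_div {a b : ℝ} (ha : 0 < a) (hab : a ≤ b) :
    Ein b - Ein a ≤ log (b / a) := by
  rw [Ein, Ein, integral_interval_sub_left
      (intervalIntegrable_one_sub_exp_neg_div le_rfl (ha.le.trans hab))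
      (intervalIntegrable_one_sub_exp_neg_div le_rfl ha.le),
    ← integral_inv_of_pos ha (ha.trans_le hab)]
  refine integral_mono_on hab (intervalIntegrable_one_sub_exp_neg_div ha.le hab) ?_
    fun t ht => one_sub_exp_neg_div_le_inv (ha.trans_le ht.1)
  exact intervalIntegrable_inv (fun t ht => by
    rw [uIcc_of_le hab] at ht; exact (ha.trans_le ht.1).ne') continuousOn_id

lemma exp_neg_Ein_le_one {a : ℝ} (ha : 0 ≤ a) : exp (-Ein a) ≤ 1 :=
  exp_le_one_iff.mpr (neg_nonpos.mpr (Ein_nonneg ha))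

lemma one_sub_le_exp_neg_Ein {a : ℝ} (ha : 0 ≤ a) : 1 - a ≤ exp (-Ein a) := by
  linarith [add_one_le_exp (-a), exp_le_exp.mpr (neg_le_neg (Ein_le_self ha))]

lemma monotoneOn_mul_exp_neg_Ein : MonotoneOn (fun w => w * exp (-Ein w)) (Ici 0) := by
  intro a ha b _ hab
  rcases (mem_Ici.mp ha).eq_or_lt with rfl | ha
  · simp only [zero_mul]
    exact mul_nonneg hab (exp_pos _).le
  have hb : 0 < b := ha.trans_le hab
  have hlog := Ein_sub_Ein_le_log_div ha hab
  calc a * exp (-Ein a) = b * exp (-(Ein a + log (b / a))) := by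
        rw [neg_add, exp_add, exp_neg (log _), exp_log (div_pos hb ha)]
        field_simp
    _ ≤ b * exp (-Ein b) := by gcongr; linarith

lemma one_third_le_exp_neg_eulerMascheroniConstant : 1 / 3 ≤ exp (-eulerMascheroniConstant) := by
  have := eulerMascheroniConstant_lt_two_thirds
  linarith [add_one_le_exp (-eulerMascheroniConstant)]

/-- Let `α : [0, e^{−γ}) → [0,∞)` be defined by `α(η)·exp(−Ein(α(η))) = η`.  Then for all
`0 ≤ w ≤ 0.2` one has `w ≤ α(w) ≤ w + 2w²`. -/
theorem stmt3 (α : ℝ → ℝ)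
    (hα : ∀ η : ℝ, 0 ≤ η → η < Real.exp (-Real.eulerMascheroniConstant) →
      0 ≤ α η ∧ α η * Real.exp (-(Ein (α η))) = η)
    (w : ℝ) (hw0 : 0 ≤ w) (hw1 : w ≤ 0.2) :
    w ≤ α w ∧ α w ≤ w + 2 * w ^ 2 := by
  obtain ⟨ha0, hw⟩ := hα w hw0 (by linarith [one_third_le_exp_neg_eulerMascheroniConstant])
  set a := α w
  have ha : a ≤ 0.29 := by
    by_contra! h
    have hmono := monotoneOn_mul_exp_neg_Ein (by norm_num : (0.29 : ℝ) ∈ Ici 0) ha0 h.le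
    have hexp := one_sub_le_exp_neg_Ein (by norm_num : (0 : ℝ) ≤ 0.29)
    simp only [hw] at hmono
    nlinarith
  have hwa : a * (1 - a) ≤ w := hw ▸ mul_le_mul_of_nonneg_left (one_sub_le_exp_neg_Ein ha0) ha0
  refine ⟨hw ▸ mul_le_of_le_one_right ha0 (exp_neg_Ein_le_one ha0), ?_⟩
  have hsq : a * (1 - a) * (a * (1 - a)) ≤ w * w := mul_self_le_mul_self (by nlinarith) hwa
  nlinarith
end

section
/- Fix m, z > 0 and for each integer k ≥ 2 define s̃_k := (m/(k(k−1)))·e^{−m/z}·Σ_{ℓ=k−1}^∞ (1/ℓ!)·(m/z)^ℓ. Then Σ_{k≥2} s̃_k = m − z·(1 − e^{−m/z}). -/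
/-- `s̃_k = (m/(k(k−1)))·e^{−m/z}·∑_{ℓ=k−1}^∞ (m/z)^ℓ/ℓ!` (with the sum reindexed from `0`). -/
noncomputable def stilde (m z : ℝ) (k : ℕ) : ℝ :=
  m / ((k : ℝ) * ((k : ℝ) - 1)) * Real.exp (-(m / z)) *
    ∑' ℓ : ℕ, (m / z) ^ (ℓ + (k - 1)) / (Nat.factorial (ℓ + (k - 1)))

/-! Interchanging the order of summation turns `∑_{k ≥ 2} (k(k-1))⁻¹ ∑_{ℓ ≥ k-1} a_ℓ`
into `∑_ℓ a_ℓ ∑_{k=2}^{ℓ+1} (k(k-1))⁻¹ = ∑_ℓ a_ℓ (1 - 1/(ℓ+1))`, by telescoping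
`1/(k(k-1)) = 1/(k-1) - 1/k`. For `a_ℓ = x^ℓ/ℓ!` with `x = m/z`, the two resulting series
are `e^x` and `(e^x - 1)/x`. -/

open Finset Nat

theorem tsum_mul_tsum_nat_add_succ_eq_tsum_sum_range_mul
    {R : Type*} [NormedRing R] [CompleteSpace R] {a w : ℕ → R} (ha : Summable fun n => ‖a n‖) (hw : Summable fun j => ‖w j‖) :
    ∑' j, w j * ∑' n, a (n + (j + 1)) = ∑' n, (∑ j ∈ range n, w j) * a n := by
  let G : ℕ → ℕ → R := fun j n => if j < n then w j * a n else 0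
  have hG_summable : Summable (Function.uncurry G) := by
    refine (hw.mul_norm ha).of_norm_bounded fun p => ?_
    simp only [Function.uncurry, G]
    split_ifs <;> simp
  have hG_row (j : ℕ) : ∑' n, G j n = w j * ∑' n, a (n + (j + 1)) := by
    have hshift : Function.Injective fun n => n + (j + 1) := add_left_injective _
    rw [← hshift.tsum_eq, ← ((summable_nat_add_iff (j + 1)).mpr ha.of_norm).tsum_mul_left]
    · exact tsum_congr fun n => if_pos (by omega)
    · intro n hn
      have hjn : j < n := by by_contra h; exact hn (if_neg h)
      exact ⟨n - (j + 1), by simp only; omega⟩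
  have hG_col (n : ℕ) : ∑' j, G j n = (∑ j ∈ range n, w j) * a n := by
    rw [tsum_eq_sum (s := range n) (fun j hj => if_neg (by simpa using hj)), sum_mul]
    exact sum_congr rfl fun j hj => if_pos (mem_range.mp hj)
  rw [← tsum_congr hG_row, ← tsum_congr hG_col, hG_summable.tsum_comm]

theorem sum_range_inv_add_one_mul_add_two (n : ℕ) :
    ∑ j ∈ range n, (((j : ℝ) + 1) * ((j : ℝ) + 2))⁻¹ = 1 - ((n : ℝ) + 1)⁻¹ := by
  have htelescope (j : ℕ) :
      (((j : ℝ) + 1) * ((j : ℝ) + 2))⁻¹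
        = ((j : ℝ) + 1)⁻¹ - (((j + 1 : ℕ) : ℝ) + 1)⁻¹ := by
    push_cast; field_simp; ring
  rw [sum_congr rfl fun j _ => htelescope j, sum_range_sub']
  simp

theorem summable_inv_add_one_mul_add_two :
    Summable fun j : ℕ => (((j : ℝ) + 1) * ((j : ℝ) + 2))⁻¹ :=
  summable_of_sum_range_le (c := 1) (fun _ => by positivity) fun n => by
    rw [sum_range_inv_add_one_mul_add_two]; exact sub_le_self _ (by positivity)

theorem Real.hasSum_pow_div_factorial_succ {x : ℝ} (hx : x ≠ 0) :
    HasSum (fun n : ℕ => x ^ n / (n + 1)!) ((Real.exp x - 1) / x) := by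
  have h := (hasSum_nat_add_iff' 1).mpr (NormedSpace.expSeries_div_hasSum_exp (x := x))
  rw [← Real.exp_eq_exp_ℝ, sum_range_one, pow_zero, Nat.factorial_zero, Nat.cast_one,
    div_one] at h
  have hshift (n : ℕ) : x ^ (n + 1) / ((n + 1)! : ℝ) / x = x ^ n / (n + 1)! := by
    rw [pow_succ]; field_simp
  simpa only [hshift] using h.div_const x

theorem Real.tsum_sum_range_inv_add_one_mul_add_two_mul_pow_div_factorial {x : ℝ} (hx : x ≠ 0) :
    ∑' n, (∑ j ∈ range n, (((j : ℝ) + 1) * ((j : ℝ) + 2))⁻¹) * (x ^ n / n !)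
      = Real.exp x - (Real.exp x - 1) / x := by
  have hweights (n : ℕ) :
      (∑ j ∈ range n, (((j : ℝ) + 1) * ((j : ℝ) + 2))⁻¹) * (x ^ n / n !)
        = x ^ n / (n)! - x ^ n / (n + 1)! := by
    rw [sum_range_inv_add_one_mul_add_two, Nat.factorial_succ]; push_cast; field_simp
  have hexp := NormedSpace.expSeries_div_hasSum_exp x
  rw [← Real.exp_eq_exp_ℝ] at hexp
  simp only [hweights]
  exact (hexp.sub (Real.hasSum_pow_div_factorial_succ hx)).tsum_eq

theorem stilde_add_two (m z : ℝ) (j : ℕ) :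
    stilde m z (j + 2) = m * Real.exp (-(m / z)) * ((((j : ℝ) + 1) * ((j : ℝ) + 2))⁻¹ *
      ∑' n, (m / z) ^ (n + (j + 1)) / (n + (j + 1))!) := by
  rw [stilde, show j + 2 - 1 = j + 1 from rfl]
  push_cast
  ring

/-- `∑_{k≥2} s̃_k = m − z·(1 − e^{−m/z})` (the sum over `k ≥ 2` is reindexed via `k = j + 2`). -/
theorem stmt13 (m z : ℝ) (hm : 0 < m) (hz : 0 < z) :
    ∑' j : ℕ, stilde m z (j + 2) = m - z * (1 - Real.exp (-(m / z))) := by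
  set x := m / z with hx_def
  have hx : x ≠ 0 := (div_pos hm hz).ne'
  simp only [stilde_add_two]
  rw [tsum_mul_left,
    tsum_mul_tsum_nat_add_succ_eq_tsum_sum_range_mul (NormedSpace.norm_expSeries_div_summable x)
      summable_inv_add_one_mul_add_two.abs,
    Real.tsum_sum_range_inv_add_one_mul_add_two_mul_pow_div_factorial hx, Real.exp_neg, hx_def]
  field_simp
end
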